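/- Let {𝓗,Γ} be an AB-generalized boundary pair for A* with γ-field γ and Weyl function M, fix μ ∈ ℂ∖ℝ, set E := ½(M(μ) + M(conj μ)) on ran Γ₀ (a densely defined symmetric operator) and let M₀(λ) be the closure of M(λ) − E (so M₀ ∈ R[𝓗]). Then: (i) ker(clos γ(λ)) = ker M₀(λ), and this kernel is independent of λ ∈ ℂ∖ℝ; (ii) the Krein-orthogonal complement of ran Γ in 𝓗×𝓗 satisfies (ran Γ)^[⊥] = {(k, E*k) : k ∈ dom E* ∩ ker(clos γ(λ))}; in particular, ran Γ is dense in 𝓗×𝓗 if and only if dom E* ∩ ker(clos γ(λ)) = {0} for some (equivalently, for every) λ ∈ ℂ∖ℝ; (iii) Γ is single-valued if and only if mul Γ₀ = {0}, equivalently if and only if ker γ(λ) = {0} for λ ∈ ℂ∖ℝ. -/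

import Mathlib

noncomputable section

open Filter Topology

namespace BT

local notation "⟪" x ", " y "⟫" => @inner ℂ _ _ x y

section Ops
variable {α β γ' : Type*}

def domR (T : Set (α × β)) : Set α := {x | ∃ y, (x, y) ∈ T}
def ranR (T : Set (α × β)) : Set β := {y | ∃ x, (x, y) ∈ T}
def kerR [Zero β] (T : Set (α × β)) : Set α := {x | (x, (0 : β)) ∈ T}
def mulR [Zero α] (T : Set (α × β)) : Set β := {y | ((0 : α), y) ∈ T}
def invR (T : Set (α × β)) : Set (β × α) := {p | (p.2, p.1) ∈ T}
def compR (T₂ : Set (β × γ')) (T₁ : Set (α × β)) : Set (α × γ') :=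
  {p | ∃ y, (p.1, y) ∈ T₁ ∧ (y, p.2) ∈ T₂}
def csum [Add α] [Add β] (T₁ T₂ : Set (α × β)) : Set (α × β) :=
  {p | ∃ q ∈ T₁, ∃ r ∈ T₂, p = (q.1 + r.1, q.2 + r.2)}

def IsLinRel {M : Type*} [AddCommGroup M] [Module ℂ M] (s : Set M) : Prop :=
  ∃ p : Submodule ℂ M, (p : Set M) = s

def IsBddRel [Norm α] [Norm β] (T : Set (α × β)) : Prop :=
  ∃ C : ℝ, ∀ p ∈ T, ‖p.2‖ ≤ C * ‖p.1‖

def BddInv [NormedAddCommGroup α] (T : Set (α × α)) : Prop :=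
  (∀ v, ∃ p ∈ T, p.2 = v) ∧ (∀ p ∈ T, ∀ q ∈ T, p.2 = q.2 → p.1 = q.1) ∧
    ∃ C : ℝ, ∀ p ∈ T, ‖p.1‖ ≤ C * ‖p.2‖
end Ops

section Shifts
variable {α : Type*} [AddCommGroup α] [Module ℂ α]

def shiftSub (T : Set (α × α)) (l : ℂ) : Set (α × α) :=
  {p | ∃ q ∈ T, p = (q.1, q.2 - l • q.1)}
def shiftAdd (T : Set (α × α)) (l : ℂ) : Set (α × α) :=
  {p | ∃ q ∈ T, p = (q.1, q.2 + l • q.1)}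
def hatN (T : Set (α × α)) (l : ℂ) : Set (α × α) := {p ∈ T | p.2 = l • p.1}
def Nlam (T : Set (α × α)) (l : ℂ) : Set α := {f | (f, l • f) ∈ T}
def Hrel (A0s : Set (α × α)) (l : ℂ) : Set (α × (α × α)) :=
  {q | q.2 ∈ A0s ∧ q.2.2 - l • q.2.1 = q.1}
end Shifts

section InnerDefs
variable {E F : Type*} [NormedAddCommGroup E] [InnerProductSpace ℂ E]
  [NormedAddCommGroup F] [InnerProductSpace ℂ F]

def adjR (S : Set (F × E)) : Set (E × F) :=
  {p | ∀ q ∈ S, ⟪p.1, q.2⟫ = ⟪p.2, q.1⟫}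

def IsClosedSymRel (A : Set (E × E)) : Prop :=
  IsLinRel A ∧ IsClosed A ∧ A ⊆ adjR A

def kIP (p q : E × E) : ℂ := -Complex.I * ⟪q.1, p.2⟫ + Complex.I * ⟪q.2, p.1⟫

def kreinOrth (S : Set (E × E)) : Set (E × E) := {v | ∀ u ∈ S, kIP u v = 0}

def GreenPair (Γ : Set ((E × E) × (F × F))) : Prop :=
  ∀ p ∈ Γ, ∀ q ∈ Γ,
    ⟪q.1.1, p.1.2⟫ - ⟪q.1.2, p.1.1⟫ = ⟪q.2.1, p.2.2⟫ - ⟪q.2.2, p.2.1⟫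

def G0 (Γ : Set ((E × E) × (F × F))) : Set ((E × E) × F) := {p | ∃ h', (p.1, (p.2, h')) ∈ Γ}
def G1 (Γ : Set ((E × E) × (F × F))) : Set ((E × E) × F) := {p | ∃ h, (p.1, (h, p.2)) ∈ Γ}
def A0 (Γ : Set ((E × E) × (F × F))) : Set (E × E) := kerR (G0 Γ)
def A1 (Γ : Set ((E × E) × (F × F))) : Set (E × E) := kerR (G1 Γ)
def weyl (Γ : Set ((E × E) × (F × F))) (l : ℂ) : Set (F × F) :=
  {p | ∃ f : E, ((f, l • f), p) ∈ Γ}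
def gfield (Γ : Set ((E × E) × (F × F))) (l : ℂ) : Set (F × E) :=
  {p | ∃ h', ((p.2, l • p.2), (p.1, h')) ∈ Γ}

def kreinAdj (Γ : Set ((E × E) × (F × F))) : Set ((F × F) × (E × E)) :=
  {q | ∀ p ∈ Γ, kIP p.1 q.2 = kIP p.2 q.1}

def IsIsomPair (A : Set (E × E)) (Γ : Set ((E × E) × (F × F))) : Prop :=
  IsLinRel Γ ∧ domR Γ ⊆ adjR A ∧ GreenPair Γ
def IsDomDense (A : Set (E × E)) (Γ : Set ((E × E) × (F × F))) : Prop :=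
  closure (domR Γ) = adjR A
def IsABPair (A : Set (E × E)) (Γ : Set ((E × E) × (F × F))) : Prop :=
  IsIsomPair A Γ ∧ IsDomDense A Γ ∧ Dense (ranR (G0 Γ)) ∧ A0 Γ = adjR (A0 Γ)
def IsBPair (A : Set (E × E)) (Γ : Set ((E × E) × (F × F))) : Prop :=
  IsABPair A Γ ∧ ranR (G0 Γ) = Set.univ
def IsUnitaryPair (A : Set (E × E)) (Γ : Set ((E × E) × (F × F))) : Prop :=
  GreenPair Γ ∧ domR Γ ⊆ adjR A ∧ IsDomDense A Γ ∧ invR Γ = kreinAdj Γ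
def IsUnitaryBT (A : Set (E × E)) (Γ : Set ((E × E) × (F × F))) : Prop :=
  IsUnitaryPair A Γ ∧ mulR Γ = {0}
def IsOrdinaryBT (A : Set (E × E)) (Γ : Set ((E × E) × (F × F))) : Prop :=
  IsIsomPair A Γ ∧ mulR Γ = {0} ∧ domR Γ = adjR A ∧ ranR Γ = Set.univ

def Erel (Γ : Set ((E × E) × (F × F))) (m : ℂ) : Set (F × F) :=
  {p | ∃ u' v', (p.1, u') ∈ weyl Γ m ∧ (p.1, v') ∈ weyl Γ ((starRingEnd ℂ) m) ∧
        p.2 = (2 : ℂ)⁻¹ • (u' + v')}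

def triTransform (Γ : Set ((E × E) × (F × F))) (e : Set (F × F)) :
    Set ((E × E) × (F × F)) :=
  {q | ∃ h h' w, (q.1, (h, h')) ∈ Γ ∧ (h, w) ∈ e ∧ q.2 = (h, w + h')}

def formVal (l : ℂ) (u u' : F) : ℝ :=
  ((l - (starRingEnd ℂ) l)⁻¹ * (⟪u, u'⟫ - ⟪u', u⟫)).re

def FormClosable (l : ℂ) (Ms : Set (F × F)) : Prop :=
  ∀ u u' : ℕ → F, (∀ n, (u n, u' n) ∈ Ms) →
    Tendsto u atTop (nhds (0 : F)) →
    Tendsto (fun nm : ℕ × ℕ => formVal l (u nm.1 - u nm.2) (u' nm.1 - u' nm.2)) atTop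
      (nhds (0 : ℝ)) →
    Tendsto (fun n => formVal l (u n) (u' n)) atTop (nhds (0 : ℝ))

def formClosureDom (l : ℂ) (Ms : Set (F × F)) : Set F :=
  {v | ∃ u u' : ℕ → F, (∀ n, (u n, u' n) ∈ Ms) ∧ Tendsto u atTop (nhds v) ∧
    Tendsto (fun nm : ℕ × ℕ => formVal l (u nm.1 - u nm.2) (u' nm.1 - u' nm.2)) atTop
      (nhds (0 : ℝ))}

end InnerDefs

section CompleteDefs
variable {F : Type*} [NormedAddCommGroup F] [InnerProductSpace ℂ F] [CompleteSpace F]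

def IsNevFun (M₀ : ℂ → F →L[ℂ] F) : Prop :=
  DifferentiableOn ℂ M₀ {l : ℂ | l.im ≠ 0} ∧
  (∀ l : ℂ, l.im ≠ 0 → M₀ ((starRingEnd ℂ) l) = ContinuousLinearMap.adjoint (M₀ l)) ∧
  (∀ l : ℂ, 0 < l.im → ∀ u, 0 ≤ (⟪u, M₀ l u⟫).im)

def ImOp (Tb : F →L[ℂ] F) : F →L[ℂ] F :=
  ((2 : ℂ) * Complex.I)⁻¹ • (Tb - ContinuousLinearMap.adjoint Tb)

end CompleteDefs

/-!
Since `A₀` is selfadjoint, `A₀ - l` is onto for nonreal `l`; this gives `dom Γ = A₀ ∔ N̂_l(A*)`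
and `ran Γ₀ = dom M(l)`. Green's identity makes `⟪v, (M(l) - E) x⟫` a bounded functional of
`γ(l) x` for each `v ∈ ran Γ₀`, and bounds `‖γ(l) x‖²` by `‖x‖ ‖(M(l) - E) x‖`; passing to
closures gives `ker (clos γ(l)) = ker M₀(l)`. The resolvent of `A₀` maps `γ(l)` boundedly into
`γ(z)`, so this kernel does not depend on `l`.

The Krein-orthogonal complement of `ran Γ` is its adjoint. Splitting `ran Γ` along
`A₀ ∔ N̂_l(A*)`, orthogonality to the boundary values of `N̂_m`, `N̂_(conj m)` and `N̂_l` amounts to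
`(k, k') ∈ E*` and `M₀(l)* k = 0`, i.e. `k ∈ ker (clos γ(conj l))`, and orthogonality to `Γ₁(A₀)`
then holds automatically.
-/

section LinRel
variable {M : Type*} [AddCommGroup M] [Module ℂ M] {s : Set M}

lemma IsLinRel.zero_mem (h : IsLinRel s) : (0 : M) ∈ s := by
  obtain ⟨p, rfl⟩ := h; exact p.zero_mem

lemma IsLinRel.add_mem (h : IsLinRel s) {a b : M} (ha : a ∈ s) (hb : b ∈ s) : a + b ∈ s := by
  obtain ⟨p, rfl⟩ := h; exact p.add_mem ha hb

lemma IsLinRel.sub_mem (h : IsLinRel s) {a b : M} (ha : a ∈ s) (hb : b ∈ s) : a - b ∈ s := by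
  obtain ⟨p, rfl⟩ := h; exact p.sub_mem ha hb

end LinRel

lemma IsLinRel.ranR {α β : Type*} [AddCommGroup α] [Module ℂ α] [AddCommGroup β] [Module ℂ β]
    {T : Set (α × β)} (hT : IsLinRel T) : IsLinRel (ranR T) := by
  obtain ⟨P, rfl⟩ := hT
  exact ⟨P.map (LinearMap.snd ℂ α β), by ext; simp [BT.ranR]⟩

lemma mem_kerR_closure_of_norm_le {α β γ : Type*} [PseudoMetricSpace α]
    [SeminormedAddCommGroup β] [SeminormedAddCommGroup γ] {S : Set (α × β)} {T : Set (α × γ)}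
    {u : α} (hu : u ∈ kerR (closure S)) {φ : α × β → ℝ} (hφ : ContinuousAt φ (u, 0))
    (hφ0 : φ (u, 0) = 0) (hST : ∀ p ∈ S, ∃ y, (p.1, y) ∈ T ∧ ‖y‖ ≤ φ p) :
    u ∈ kerR (closure T) := by
  obtain ⟨q, hqS, hq⟩ := mem_closure_iff_seq_limit.1 hu
  choose y hyT hy using fun n => hST (q n) (hqS n)
  have hy0 : Tendsto y atTop (𝓝 0) := squeeze_zero_norm hy (hφ0 ▸ hφ.tendsto.comp hq)
  exact mem_closure_of_tendsto (((continuous_fst.tendsto _).comp hq).prodMk_nhds hy0)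
    (Eventually.of_forall hyT)

section Adjoint
variable {E F : Type*} [NormedAddCommGroup E] [InnerProductSpace ℂ E]
  [NormedAddCommGroup F] [InnerProductSpace ℂ F]

def adjRSubmodule (S : Set (F × E)) : Submodule ℂ (E × F) where
  carrier := adjR S
  add_mem' ha hb q hq := by
    simp only [Prod.fst_add, Prod.snd_add, inner_add_left, ha q hq, hb q hq]
  zero_mem' q _ := by simp
  smul_mem' c a ha q hq := by
    simp only [Prod.smul_fst, Prod.smul_snd, inner_smul_left, ha q hq]

lemma isClosed_adjR (S : Set (F × E)) : IsClosed (adjR S) := by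
  have : adjR S = ⋂ q ∈ S, {p : E × F | ⟪p.1, q.2⟫ = ⟪p.2, q.1⟫} := by
    ext p; simp [adjR]
  rw [this]
  exact isClosed_biInter fun q _ => isClosed_eq (by fun_prop) (by fun_prop)

lemma kreinOrth_eq_adjR (S : Set (E × E)) : kreinOrth S = adjR S := by
  ext v
  refine forall₂_congr fun u _ => ?_
  have : kIP u v = Complex.I * (⟪v.2, u.1⟫ - ⟪v.1, u.2⟫) := by rw [kIP]; ring
  rw [this, mul_eq_zero, or_iff_right Complex.I_ne_zero, sub_eq_zero, eq_comm]

lemma snd_eq_zero_of_zero_mem_adjR {S : Set (F × E)} (hS : Dense (domR S)) {k' : F}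
    (hk' : (0, k') ∈ adjR S) : k' = 0 :=
  hS.eq_zero_of_inner_left ℂ fun v ⟨w, hvw⟩ => by simpa using (hk' (v, w) hvw).symm

end Adjoint

section DenseAdjoint
variable {E F : Type*} [NormedAddCommGroup E] [InnerProductSpace ℂ E] [CompleteSpace E]
  [NormedAddCommGroup F] [InnerProductSpace ℂ F] [CompleteSpace F]

open WithLp in
/-- `(k, k') ↦ (-k', k)` identifies `adjR L` with the orthogonal complement of `L` in the
`L²`-product. -/
lemma dense_iff_adjR_subset_zero {L : Set (F × E)} (hL : IsLinRel L) :
    Dense L ↔ adjR L ⊆ {0} := by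
  obtain ⟨P, rfl⟩ := hL
  set K := P.comap (WithLp.linearEquiv 2 ℂ (F × E)).toLinearMap
  have hdense : Dense (P : Set (F × E)) ↔ Dense (K : Set (WithLp 2 (F × E))) :=
    (homeomorphProd 2 F E).isOpenQuotientMap.dense_preimage_iff.symm
  have hperp (k : E × F) : toLp 2 (-k.2, k.1) ∈ Kᗮ ↔ k ∈ adjR (P : Set (F × E)) := by
    refine (Submodule.mem_orthogonal' _ _).trans ⟨fun h q hq => ?_, fun h u hu => ?_⟩
    · have := h (toLp 2 q) hq
      simp only [prod_inner_apply, inner_neg_left, neg_add_eq_zero] at this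
      exact this.symm
    · simp only [prod_inner_apply, inner_neg_left, neg_add_eq_zero]
      exact (h _ hu).symm
  rw [hdense, Submodule.dense_iff_topologicalClosure_eq_top,
    Submodule.topologicalClosure_eq_top_iff, Submodule.eq_bot_iff]
  constructor
  · intro h k hk
    simpa [Prod.ext_iff, and_comm] using h _ ((hperp k).2 hk)
  · intro h w hw
    have hk := h ((hperp ((ofLp w).2, -(ofLp w).1)).1 (by rwa [neg_neg]))
    obtain ⟨h2, h1⟩ := Prod.ext_iff.1 hk
    exact (ofLp_eq_zero 2).1 (Prod.ext (neg_eq_zero.1 h1) h2)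

end DenseAdjoint

section SelfAdjoint
variable {H : Type*} [NormedAddCommGroup H] [InnerProductSpace ℂ H]

lemma inner_comm_of_mem_of_eq_adjR {S : Set (H × H)} (hS : S = adjR S) {p : H × H} (hp : p ∈ S) :
    ⟪p.1, p.2⟫ = ⟪p.2, p.1⟫ :=
  (show p ∈ adjR S by rwa [← hS]) p hp

lemma abs_im_mul_norm_le_norm_sub_smul {f f' : H} (hff' : ⟪f, f'⟫ = ⟪f', f⟫) (z : ℂ) :
    |z.im| * ‖f‖ ≤ ‖f' - z • f‖ := by
  have hre : (⟪f, f'⟫).im = 0 := by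
    rw [← Complex.conj_eq_iff_im, inner_conj_symm, hff']
  have him : (⟪f, f' - z • f⟫).im = -(z.im * ‖f‖ ^ 2) := by
    rw [inner_sub_right, inner_smul_right, inner_self_eq_norm_sq_to_K]
    simp [Complex.mul_im, hre, ← Complex.ofReal_pow]
  rcases (norm_nonneg f).eq_or_lt with h0 | h0
  · simp [← h0]
  refine le_of_mul_le_mul_right ?_ h0
  calc |z.im| * ‖f‖ * ‖f‖ = |(⟪f, f' - z • f⟫).im| := by
        rw [him, abs_neg, abs_mul, abs_of_nonneg (sq_nonneg ‖f‖)]; ring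
    _ ≤ ‖⟪f, f' - z • f⟫‖ := Complex.abs_im_le_norm _
    _ ≤ ‖f‖ * ‖f' - z • f‖ := norm_inner_le_norm _ _
    _ = ‖f' - z • f‖ * ‖f‖ := mul_comm _ _

variable [CompleteSpace H]

/-- `ran (S - z)` is closed because `S - z` is bounded below on the complete space `S`, and dense
because a vector orthogonal to it is an eigenvector of `S = S*` for the eigenvalue `conj z`. -/
lemma exists_mem_sub_smul_eq {S : Set (H × H)} (hS : S = adjR S) {z : ℂ} (hz : z.im ≠ 0)
    (g : H) : ∃ p ∈ S, p.2 - z • p.1 = g := by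
  set P := adjRSubmodule S
  have hP (q : H × H) : q ∈ P ↔ q ∈ S := by rw [hS]; rfl
  have : CompleteSpace P := (isClosed_adjR S).completeSpace_coe
  let L : P →L[ℂ] H :=
    (ContinuousLinearMap.snd ℂ H H - z • ContinuousLinearMap.fst ℂ H H).comp P.subtypeL
  have hL (p : P) : L p = (p : H × H).2 - z • (p : H × H).1 := rfl
  have hzpos : 0 < |z.im| := abs_pos.mpr hz
  set C := (1 + ‖z‖) / |z.im| + 1
  have hbound (p : P) : ‖p‖ ≤ C.toNNReal * ‖L p‖ := by
    have h1 : ‖(p : H × H).1‖ ≤ ‖L p‖ / |z.im| := by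
      rw [le_div_iff₀ hzpos, mul_comm, hL]
      exact abs_im_mul_norm_le_norm_sub_smul (inner_comm_of_mem_of_eq_adjR hS ((hP _).1 p.2)) z
    have h2 : ‖(p : H × H).2‖ ≤ ‖L p‖ + ‖z‖ * ‖(p : H × H).1‖ := by
      rw [← norm_smul, hL]
      exact norm_le_norm_sub_add _ _
    have hC : C * ‖L p‖ = (1 + ‖z‖) * (‖L p‖ / |z.im|) + ‖L p‖ := by ring
    rw [Real.coe_toNNReal _ (by positivity), Submodule.coe_norm, Prod.norm_def, hC]
    have := div_nonneg (norm_nonneg (L p)) hzpos.le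
    refine max_le ?_ ?_ <;> nlinarith [norm_nonneg z, norm_nonneg (L p)]
  have hclosed : IsClosed (Set.range L) :=
    (L.antilipschitz_of_bound hbound).isClosed_range L.uniformContinuous
  have hdense : Dense (Set.range L) := by
    rw [show Set.range L = (LinearMap.range (L : P →ₗ[ℂ] H) : Set H) from
      (LinearMap.coe_range _).symm, Submodule.dense_iff_topologicalClosure_eq_top,
      Submodule.topologicalClosure_eq_top_iff, Submodule.eq_bot_iff]
    intro v hv
    have heigen : (v, (starRingEnd ℂ) z • v) ∈ S := by
      rw [hS]
      intro q hq
      have := (Submodule.mem_orthogonal' _ v).1 hv _ ⟨⟨q, (hP q).2 hq⟩, rfl⟩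
      simp only [ContinuousLinearMap.coe_coe, hL, inner_sub_right, inner_smul_right] at this
      rw [inner_smul_left, Complex.conj_conj]
      linear_combination this
    have hvv := inner_comm_of_mem_of_eq_adjR hS heigen
    rw [inner_smul_right, inner_smul_left, Complex.conj_conj] at hvv
    have hne : (starRingEnd ℂ) z - z ≠ 0 := sub_ne_zero.2 (mt Complex.conj_eq_iff_im.1 hz)
    refine inner_self_eq_zero.1 ((mul_eq_zero.1 ?_).resolve_left hne)
    linear_combination hvv
  obtain ⟨p, hp⟩ : g ∈ Set.range L := by
    rw [← hclosed.closure_eq, hdense.closure_eq]; trivial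
  exact ⟨p, (hP _).1 p.2, hp⟩

end SelfAdjoint

lemma kerR_gfield_eq_mulR_G0 {E F : Type*} [NormedAddCommGroup E] [InnerProductSpace ℂ E]
    (Γ : Set ((E × E) × (F × F))) (l : ℂ) : kerR (gfield Γ l) = mulR (G0 Γ) := by
  ext u
  simp only [kerR, gfield, mulR, G0, smul_zero, Set.mem_ofPred_eq, Prod.mk_zero_zero]

section BoundaryPair
variable {E F : Type*} [NormedAddCommGroup E] [InnerProductSpace ℂ E]
  [NormedAddCommGroup F] [InnerProductSpace ℂ F] {Γ : Set ((E × E) × (F × F))}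

lemma GreenPair.sub_conj_mul_inner_eq (hG : GreenPair Γ) {l z : ℂ} {f g : E} {u u' v v' : F}
    (hp : ((f, l • f), (u, u')) ∈ Γ) (hq : ((g, z • g), (v, v')) ∈ Γ) :
    (l - (starRingEnd ℂ) z) * ⟪g, f⟫ = ⟪v, u'⟫ - ⟪v', u⟫ := by
  have h := hG _ hp _ hq
  simp only [inner_smul_right, inner_smul_left] at h
  linear_combination h

lemma inner_comm_of_mem_Erel (hG : GreenPair Γ) {m : ℂ} {x w : F} (hw : (x, w) ∈ Erel Γ m) :
    ⟪x, w⟫ = ⟪w, x⟫ := by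
  obtain ⟨a, b, ⟨g, hga⟩, ⟨k, hkb⟩, rfl⟩ := hw
  have e1 := hG.sub_conj_mul_inner_eq hga hkb
  have e2 := hG.sub_conj_mul_inner_eq hkb hga
  rw [Complex.conj_conj] at e1
  have hhalf : (starRingEnd ℂ) (2 : ℂ)⁻¹ = (2 : ℂ)⁻¹ := by rw [map_inv₀, Complex.conj_ofNat]
  simp only [inner_smul_right, inner_smul_left, inner_add_right, inner_add_left, hhalf]
  linear_combination (-(2 : ℂ)⁻¹) * e1 - (2 : ℂ)⁻¹ * e2

lemma mulR_eq_zero_iff_mulR_G0 (hlin : IsLinRel Γ) (hG : GreenPair Γ)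
    (hdense : Dense (ranR (G0 Γ))) :
    mulR Γ = {(0 : F × F)} ↔ mulR (G0 Γ) = {(0 : F)} := by
  simp only [Set.eq_singleton_iff_unique_mem]
  refine ⟨fun ⟨_, h⟩ => ⟨⟨0, hlin.zero_mem⟩, fun u ⟨u', hu⟩ => congrArg Prod.fst (h (u, u') hu)⟩,
    fun ⟨_, h⟩ => ⟨hlin.zero_mem, ?_⟩⟩
  rintro ⟨u, u'⟩ hu
  obtain rfl : u = 0 := h u ⟨u', hu⟩
  have : u' = 0 := hdense.eq_zero_of_inner_right ℂ fun v ⟨q, v', hq⟩ => by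
    simpa using (hG _ hu _ hq).symm
  rw [this]; rfl

-- `M(l) - E`, where `E = ½ (M(m) + M(conj m))`
def weylSubRe (Γ : Set ((E × E) × (F × F))) (m l : ℂ) : Set (F × F) :=
  {p | ∃ u' w, (p.1, u') ∈ weyl Γ l ∧ (p.1, w) ∈ Erel Γ m ∧ p.2 = u' - w}

lemma abs_im_mul_norm_sq_le (hG : GreenPair Γ) {l m : ℂ} {y : E} {x u' w : F}
    (hy : ((y, l • y), (x, u')) ∈ Γ) (hw : (x, w) ∈ Erel Γ m) :
    |l.im| * ‖y‖ ^ 2 ≤ ‖x‖ * ‖u' - w‖ := by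
  have key : (l - (starRingEnd ℂ) l) * ⟪y, y⟫ = ⟪x, u' - w⟫ - ⟪u' - w, x⟫ := by
    rw [inner_sub_right, inner_sub_left]
    linear_combination hG.sub_conj_mul_inner_eq hy hy + inner_comm_of_mem_Erel hG hw
  have hnorm := congrArg norm key
  rw [Complex.sub_conj, inner_self_eq_norm_sq_to_K] at hnorm
  simp only [Complex.ofReal_mul, Complex.ofReal_ofNat, Complex.coe_algebraMap, Complex.norm_mul,
    Complex.norm_ofNat, Complex.norm_real, Real.norm_eq_abs, Complex.norm_I, mul_one, norm_pow,
    abs_norm] at hnorm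
  have hle : ‖⟪x, u' - w⟫ - ⟪u' - w, x⟫‖ ≤ 2 * (‖x‖ * ‖u' - w‖) := by
    calc _ ≤ ‖⟪x, u' - w⟫‖ + ‖⟪u' - w, x⟫‖ := norm_sub_le _ _
      _ ≤ ‖x‖ * ‖u' - w‖ + ‖u' - w‖ * ‖x‖ :=
          add_le_add (norm_inner_le_norm _ _) (norm_inner_le_norm _ _)
      _ = 2 * (‖x‖ * ‖u' - w‖) := by ring
  linarith

variable {N : ℂ → F →L[ℂ] F} {m l : ℂ}

lemma apply_eq_of_closure_weylSubRe_eq (hN : closure (weylSubRe Γ m l) = {p | p.2 = N l p.1})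
    {x u' w : F} (hu : (x, u') ∈ weyl Γ l) (hw : (x, w) ∈ Erel Γ m) : N l x = u' - w := by
  have hmem : (x, u' - w) ∈ closure (weylSubRe Γ m l) := subset_closure ⟨u', w, hu, hw, rfl⟩
  rw [hN] at hmem
  exact hmem.symm

/-- `⟪v, (M(l) - E) x⟫` is a bounded functional of `γ(l) x`. -/
lemma inner_sub_eq_of_mem_Erel (hG : GreenPair Γ) {y ψ χ : E} {x u' w v c d : F}
    (hy : ((y, l • y), (x, u')) ∈ Γ) (hw : (x, w) ∈ Erel Γ m)
    (hψ : ((ψ, m • ψ), (v, c)) ∈ Γ) (hχ : ((χ, (starRingEnd ℂ) m • χ), (v, d)) ∈ Γ) :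
    ⟪v, u' - w⟫
      = (2 : ℂ)⁻¹ * ((l - (starRingEnd ℂ) m) * ⟪ψ, y⟫ + (l - m) * ⟪χ, y⟫) := by
  obtain ⟨a, b, ⟨g, hga⟩, ⟨k, hkb⟩, rfl⟩ := hw
  have e1 := hG.sub_conj_mul_inner_eq hy hψ
  have e2 := hG.sub_conj_mul_inner_eq hy hχ
  have e3 := hG.sub_conj_mul_inner_eq hga hχ
  have e4 := hG.sub_conj_mul_inner_eq hkb hψ
  rw [Complex.conj_conj] at e2 e3
  rw [inner_sub_right, inner_smul_right, inner_add_right]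
  linear_combination (-(2 : ℂ)⁻¹) * e1 - (2 : ℂ)⁻¹ * e2 + (2 : ℂ)⁻¹ * e3 + (2 : ℂ)⁻¹ * e4

lemma mem_kerR_closure_gfield_of_apply_eq_zero (hG : GreenPair Γ)
    (hN : closure (weylSubRe Γ m l) = {p | p.2 = N l p.1}) (hl : l.im ≠ 0) {u : F}
    (hu : N l u = 0) : u ∈ kerR (closure (gfield Γ l)) := by
  have hu' : u ∈ kerR (closure (weylSubRe Γ m l)) := by
    show (u, 0) ∈ closure _
    rw [hN]
    exact hu.symm
  refine mem_kerR_closure_of_norm_le hu' (φ := fun p => √(‖p.1‖ * ‖p.2‖ / |l.im|))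
    (by fun_prop) (by simp) ?_
  rintro ⟨x, s⟩ ⟨u', w, ⟨y, hy⟩, hw, rfl⟩
  refine ⟨y, ⟨u', hy⟩, Real.le_sqrt_of_sq_le ?_⟩
  rw [le_div_iff₀ (abs_pos.2 hl), mul_comm]
  exact abs_im_mul_norm_sq_le hG hy hw

lemma inner_eq_zero_of_mem_kerR_closure_gfield (hG : GreenPair Γ) {k χ : F} {e : E × E}
    (hk : k ∈ kerR (closure (gfield Γ l))) (hχ : (e, ((0 : F), χ)) ∈ Γ) : ⟪k, χ⟫ = 0 := by
  have heq : Set.EqOn (fun q : F × E => ⟪q.1, χ⟫)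
      (fun q => ⟪q.2, e.2⟫ - (starRingEnd ℂ) l * ⟪q.2, e.1⟫) (gfield Γ l) := by
    rintro ⟨x, y⟩ ⟨h', hy⟩
    have := hG _ hχ _ hy
    simp only [inner_smul_left, inner_zero_right] at this
    linear_combination -this
  simpa using heq.closure (by fun_prop) (by fun_prop) hk

lemma adjR_ranR_subset_adjR_Erel : adjR (ranR Γ) ⊆ adjR (Erel Γ m) := by
  rintro ⟨k, k'⟩ hk ⟨x, _⟩ ⟨a, b, ⟨g, hga⟩, ⟨f, hfb⟩, rfl⟩
  have ha := hk (x, a) ⟨_, hga⟩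
  have hb := hk (x, b) ⟨_, hfb⟩
  simp only at ha hb ⊢
  rw [inner_smul_right, inner_add_right, ha, hb]
  ring

end BoundaryPair

section Resolvent
variable {E F : Type*} [NormedAddCommGroup E] [InnerProductSpace ℂ E] [CompleteSpace E]
  [NormedAddCommGroup F] [InnerProductSpace ℂ F] {Γ : Set ((E × E) × (F × F))}

/-- `dom Γ = A₀ ∔ N̂_l(A*)`, read off in the boundary values. -/
lemma exists_eigen_add_A0 (hlin : IsLinRel Γ) (hsa : A0 Γ = adjR (A0 Γ)) {l : ℂ}
    (hl : l.im ≠ 0) {f f' : E} {h h' : F} (hp : ((f, f'), (h, h')) ∈ Γ) :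
    ∃ g u' χ, ((g, l • g), (h, u')) ∈ Γ ∧ (∃ e : E × E, (e, ((0 : F), χ)) ∈ Γ) ∧
      h' = u' + χ := by
  obtain ⟨⟨e, e'⟩, ⟨χ, hχ⟩, he⟩ := exists_mem_sub_smul_eq hsa hl (f' - l • f)
  have hsub := hlin.sub_mem hp hχ
  have hpair : ((f, f'), (h, h')) - ((e, e'), ((0 : F), χ))
      = ((f - e, l • (f - e)), (h, h' - χ)) := by
    simp only [Prod.mk_sub_mk, sub_zero, Prod.mk.injEq, and_true, true_and, smul_sub]
    simp only at he
    linear_combination (norm := module) -he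
  exact ⟨f - e, h' - χ, χ, hpair ▸ hsub, ⟨(e, e'), hχ⟩, by abel⟩

lemma ranR_G0_subset_domR_weyl (hlin : IsLinRel Γ) (hsa : A0 Γ = adjR (A0 Γ)) {l : ℂ}
    (hl : l.im ≠ 0) : ranR (G0 Γ) ⊆ domR (weyl Γ l) := by
  rintro x ⟨_, _, hp⟩
  obtain ⟨g, u', _, hg, -⟩ := exists_eigen_add_A0 hlin hsa hl hp
  exact ⟨u', g, hg⟩

lemma ranR_G0_subset_domR_Erel (hlin : IsLinRel Γ) (hsa : A0 Γ = adjR (A0 Γ)) {m : ℂ}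
    (hm : m.im ≠ 0) : ranR (G0 Γ) ⊆ domR (Erel Γ m) := by
  intro x hx
  obtain ⟨a, ha⟩ := ranR_G0_subset_domR_weyl hlin hsa hm hx
  obtain ⟨b, hb⟩ :=
    ranR_G0_subset_domR_weyl hlin hsa (l := (starRingEnd ℂ) m) (by simpa using hm) hx
  exact ⟨_, a, b, ha, hb, rfl⟩

/-- `(x, y) ↦ (x, y + (A₀ - z)⁻¹ (z - l) y)` maps `γ(l)` into `γ(z)` and is bounded. -/
lemma kerR_closure_gfield_subset (hlin : IsLinRel Γ) (hsa : A0 Γ = adjR (A0 Γ)) {l z : ℂ}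
    (hz : z.im ≠ 0) : kerR (closure (gfield Γ l)) ⊆ kerR (closure (gfield Γ z)) := by
  intro u hu
  refine mem_kerR_closure_of_norm_le hu (φ := fun p => (1 + ‖z - l‖ / |z.im|) * ‖p.2‖)
    (by fun_prop) (by simp) ?_
  rintro ⟨x, y⟩ ⟨h', hp⟩
  obtain ⟨⟨e, e'⟩, ⟨χ, hχ⟩, heq⟩ := exists_mem_sub_smul_eq hsa hz ((z - l) • y)
  simp only at heq
  refine ⟨y + e, ⟨h' + χ, ?_⟩, ?_⟩
  · have hpair : (((y, l • y), (x, h')) : (E × E) × (F × F)) + ((e, e'), ((0 : F), χ))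
        = ((y + e, z • (y + e)), (x, h' + χ)) := by
      simp only [Prod.mk_add_mk, add_zero, Prod.mk.injEq, and_true, true_and]
      linear_combination (norm := module) heq
    exact hpair ▸ hlin.add_mem hp hχ
  · have hbound := abs_im_mul_norm_le_norm_sub_smul
      (inner_comm_of_mem_of_eq_adjR hsa (show (e, e') ∈ A0 Γ from ⟨χ, hχ⟩)) z
    rw [heq, norm_smul] at hbound
    have he1 : ‖e‖ ≤ ‖z - l‖ / |z.im| * ‖y‖ := by
      rw [div_mul_eq_mul_div, le_div_iff₀ (abs_pos.2 hz)]
      linarith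
    calc ‖y + e‖ ≤ ‖y‖ + ‖e‖ := norm_add_le _ _
      _ ≤ (1 + ‖z - l‖ / |z.im|) * ‖y‖ := by linarith

end Resolvent

section WeylDecomposition
variable {E F : Type*} [NormedAddCommGroup E] [InnerProductSpace ℂ E] [CompleteSpace E]
  [NormedAddCommGroup F] [InnerProductSpace ℂ F] {Γ : Set ((E × E) × (F × F))}
  {N : ℂ → F →L[ℂ] F} {m l : ℂ}

lemma apply_eq_zero_of_mem_kerR_closure_gfield (hlin : IsLinRel Γ) (hG : GreenPair Γ)
    (hsa : A0 Γ = adjR (A0 Γ)) (hdense : Dense (ranR (G0 Γ))) (hm : m.im ≠ 0)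
    (hN : closure (weylSubRe Γ m l) = {p | p.2 = N l p.1}) {u : F}
    (hu : u ∈ kerR (closure (gfield Γ l))) : N l u = 0 := by
  refine hdense.eq_zero_of_inner_right ℂ fun v hv => ?_
  obtain ⟨c, ψ, hψ⟩ := ranR_G0_subset_domR_weyl hlin hsa hm hv
  obtain ⟨d, χ, hχ⟩ :=
    ranR_G0_subset_domR_weyl hlin hsa (l := (starRingEnd ℂ) m) (by simpa using hm) hv
  have heq : Set.EqOn (fun q : F × E => ⟪v, N l q.1⟫)
      (fun q => (2 : ℂ)⁻¹ * ((l - (starRingEnd ℂ) m) * ⟪ψ, q.2⟫ + (l - m) * ⟪χ, q.2⟫))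
      (gfield Γ l) := by
    rintro ⟨x, y⟩ ⟨u', hy⟩
    obtain ⟨w, hw⟩ := ranR_G0_subset_domR_Erel hlin hsa hm ⟨_, u', hy⟩
    simp only [apply_eq_of_closure_weylSubRe_eq hN ⟨y, hy⟩ hw]
    exact inner_sub_eq_of_mem_Erel hG hy hw hψ hχ
  simpa using heq.closure (by fun_prop) (by fun_prop) hu

lemma kerR_closure_gfield_eq (hlin : IsLinRel Γ) (hG : GreenPair Γ)
    (hsa : A0 Γ = adjR (A0 Γ)) (hdense : Dense (ranR (G0 Γ))) (hm : m.im ≠ 0)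
    (hN : closure (weylSubRe Γ m l) = {p | p.2 = N l p.1}) (hl : l.im ≠ 0) :
    kerR (closure (gfield Γ l)) = {u | N l u = 0} :=
  Set.Subset.antisymm
    (fun _ => apply_eq_zero_of_mem_kerR_closure_gfield hlin hG hsa hdense hm hN)
    (fun _ => mem_kerR_closure_gfield_of_apply_eq_zero hG hN hl)

lemma kerR_closure_gfield_congr (hlin : IsLinRel Γ) (hsa : A0 Γ = adjR (A0 Γ)) {z : ℂ}
    (hl : l.im ≠ 0) (hz : z.im ≠ 0) :
    kerR (closure (gfield Γ l)) = kerR (closure (gfield Γ z)) :=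
  (kerR_closure_gfield_subset hlin hsa hz).antisymm (kerR_closure_gfield_subset hlin hsa hl)

variable [CompleteSpace F]

lemma inner_adjoint_apply_eq (hlin : IsLinRel Γ) (hsa : A0 Γ = adjR (A0 Γ)) (hm : m.im ≠ 0)
    (hN : closure (weylSubRe Γ m l) = {p | p.2 = N l p.1}) {k k' v u' : F}
    (hk : (k, k') ∈ adjR (Erel Γ m)) (hv : (v, u') ∈ weyl Γ l) :
    ⟪ContinuousLinearMap.adjoint (N l) k, v⟫ = ⟪k, u'⟫ - ⟪k', v⟫ := by
  obtain ⟨f, hf⟩ := hv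
  obtain ⟨w, hw⟩ := ranR_G0_subset_domR_Erel hlin hsa hm ⟨_, u', hf⟩
  rw [ContinuousLinearMap.adjoint_inner_left, apply_eq_of_closure_weylSubRe_eq hN ⟨f, hf⟩ hw,
    inner_sub_right, hk _ hw]

lemma adjR_ranR_eq (hlin : IsLinRel Γ) (hG : GreenPair Γ) (hsa : A0 Γ = adjR (A0 Γ))
    (hdense : Dense (ranR (G0 Γ))) (hm : m.im ≠ 0)
    (hN : ∀ l : ℂ, l.im ≠ 0 → closure (weylSubRe Γ m l) = {p | p.2 = N l p.1})
    (hNadj : ∀ l : ℂ, l.im ≠ 0 → N ((starRingEnd ℂ) l) = ContinuousLinearMap.adjoint (N l))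
    (hl : l.im ≠ 0) :
    adjR (ranR Γ) = {p | p ∈ adjR (Erel Γ m) ∧ p.1 ∈ kerR (closure (gfield Γ l))} := by
  have hl' : ((starRingEnd ℂ) l).im ≠ 0 := by simpa using hl
  have hker (k : F) : ContinuousLinearMap.adjoint (N l) k = 0 ↔
      k ∈ kerR (closure (gfield Γ l)) := by
    rw [← hNadj l hl, kerR_closure_gfield_congr hlin hsa hl hl',
      kerR_closure_gfield_eq hlin hG hsa hdense hm (hN _ hl') hl']
    rfl
  ext ⟨k, k'⟩
  refine ⟨fun hk => ⟨adjR_ranR_subset_adjR_Erel hk, (hker k).1 ?_⟩, fun ⟨hE, hk⟩ => ?_⟩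
  · refine hdense.eq_zero_of_inner_left ℂ fun v hv => ?_
    obtain ⟨u', f, hf⟩ := ranR_G0_subset_domR_weyl hlin hsa hl hv
    rw [inner_adjoint_apply_eq hlin hsa hm (hN l hl) (adjR_ranR_subset_adjR_Erel hk) ⟨f, hf⟩,
      sub_eq_zero]
    exact hk (v, u') ⟨_, hf⟩
  · rintro ⟨h, h'⟩ ⟨⟨f, f'⟩, hp⟩
    obtain ⟨g, u', χ, hg, ⟨e, hχ⟩, rfl⟩ := exists_eigen_add_A0 hlin hsa hl hp
    have hu' := inner_adjoint_apply_eq hlin hsa hm (hN l hl) hE ⟨g, hg⟩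
    rw [(hker k).2 hk, inner_zero_left, eq_comm, sub_eq_zero] at hu'
    show ⟪k, u' + χ⟫ = ⟪k', h⟫
    rw [inner_add_right, inner_eq_zero_of_mem_kerR_closure_gfield hG hk hχ, add_zero, hu']

lemma dense_ranR_iff (hlin : IsLinRel Γ) (hG : GreenPair Γ) (hsa : A0 Γ = adjR (A0 Γ))
    (hdense : Dense (ranR (G0 Γ))) (hm : m.im ≠ 0)
    (hN : ∀ l : ℂ, l.im ≠ 0 → closure (weylSubRe Γ m l) = {p | p.2 = N l p.1})
    (hNadj : ∀ l : ℂ, l.im ≠ 0 → N ((starRingEnd ℂ) l) = ContinuousLinearMap.adjoint (N l))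
    (hl : l.im ≠ 0) :
    Dense (ranR Γ) ↔ domR (adjR (Erel Γ m)) ∩ kerR (closure (gfield Γ l)) ⊆ {0} := by
  rw [dense_iff_adjR_subset_zero hlin.ranR, adjR_ranR_eq hlin hG hsa hdense hm hN hNadj hl]
  have hE : Dense (domR (Erel Γ m)) := hdense.mono (ranR_G0_subset_domR_Erel hlin hsa hm)
  constructor
  · rintro h k ⟨⟨k', hk'⟩, hk⟩
    exact congrArg Prod.fst (h ⟨hk', hk⟩)
  · rintro h ⟨k, k'⟩ ⟨hk', hk⟩
    obtain rfl : k = 0 := h ⟨⟨k', hk'⟩, hk⟩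
    rw [snd_eq_zero_of_zero_mem_adjR hE hk']
    rfl

end WeylDecomposition

variable {E F : Type*} [NormedAddCommGroup E] [InnerProductSpace ℂ E] [CompleteSpace E]
  [NormedAddCommGroup F] [InnerProductSpace ℂ F] [CompleteSpace F]

theorem statement5_general (A : Set (E × E)) (Γ : Set ((E × E) × (F × F)))
    (hΓ : IsABPair A Γ)
    (m : ℂ) (hm : m.im ≠ 0)
    (N : ℂ → F →L[ℂ] F) (hN : IsNevFun N)
    -- `N l` is the closure of `M(l) − E`, where `E = Re M(m)`
    (hNclos : ∀ l : ℂ, l.im ≠ 0 →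
      closure {p : F × F | ∃ u' w, (p.1, u') ∈ weyl Γ l ∧ (p.1, w) ∈ Erel Γ m ∧
          p.2 = u' - w}
        = {p : F × F | p.2 = N l p.1}) :
    -- (i)
    (∀ l : ℂ, l.im ≠ 0 → kerR (closure (gfield Γ l)) = {u : F | N l u = 0}) ∧
    (∀ l l' : ℂ, l.im ≠ 0 → l'.im ≠ 0 → {u : F | N l u = 0} = {u : F | N l' u = 0}) ∧
    -- (ii)
    (∀ l : ℂ, l.im ≠ 0 →
      kreinOrth (ranR Γ) =
        {p : F × F | p ∈ adjR (Erel Γ m) ∧ p.1 ∈ kerR (closure (gfield Γ l))}) ∧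
    (Dense (ranR Γ) ↔ ∀ l : ℂ, l.im ≠ 0 →
      domR (adjR (Erel Γ m)) ∩ kerR (closure (gfield Γ l)) ⊆ {(0 : F)}) ∧
    (Dense (ranR Γ) ↔ ∃ l : ℂ, l.im ≠ 0 ∧
      domR (adjR (Erel Γ m)) ∩ kerR (closure (gfield Γ l)) ⊆ {(0 : F)}) ∧
    -- (iii)
    ((mulR Γ = {(0 : F × F)} ↔ mulR (G0 Γ) = {(0 : F)}) ∧
     (mulR Γ = {(0 : F × F)} ↔ ∀ l : ℂ, l.im ≠ 0 → kerR (gfield Γ l) = {(0 : F)})) := by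
  obtain ⟨⟨hlin, -, hG⟩, -, hdense, hsa⟩ := hΓ
  have hI : Complex.I.im ≠ 0 := by simp
  have hker (l : ℂ) (hl : l.im ≠ 0) :=
    kerR_closure_gfield_eq hlin hG hsa hdense hm (hNclos l hl) hl
  have hdenseRan (l : ℂ) (hl : l.im ≠ 0) :=
    dense_ranR_iff hlin hG hsa hdense hm hNclos hN.2.1 hl
  refine ⟨hker, fun l l' hl hl' => ?_, fun l hl => ?_, ⟨fun h l hl => (hdenseRan l hl).1 h,
    fun h => (hdenseRan _ hI).2 (h _ hI)⟩, ⟨fun h => ⟨_, hI, (hdenseRan _ hI).1 h⟩,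
    fun ⟨l, hl, h⟩ => (hdenseRan l hl).2 h⟩, mulR_eq_zero_iff_mulR_G0 hlin hG hdense, ?_⟩
  · rw [← hker l hl, ← hker l' hl', kerR_closure_gfield_congr hlin hsa hl hl']
  · rw [kreinOrth_eq_adjR, adjR_ranR_eq hlin hG hsa hdense hm hNclos hN.2.1 hl]
  · simp only [kerR_gfield_eq_mulR_G0, mulR_eq_zero_iff_mulR_G0 hlin hG hdense]
    exact ⟨fun h _ _ => h, fun h => h _ hI⟩

/-- kernels, the Krein-orthogonal complement of `ran Γ`, and
single-valuedness for an AB-generalized boundary pair with `M = E + M₀`. -/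
theorem statement5 (A : Set (E × E)) (Γ : Set ((E × E) × (F × F)))
    (hA : IsClosedSymRel A) (hΓ : IsABPair A Γ)
    (m : ℂ) (hm : m.im ≠ 0)
    (N : ℂ → F →L[ℂ] F) (hN : IsNevFun N)
    -- `N l` is the closure of `M(l) − E`, where `E = Re M(m)`
    (hNclos : ∀ l : ℂ, l.im ≠ 0 →
      closure {p : F × F | ∃ u' w, (p.1, u') ∈ weyl Γ l ∧ (p.1, w) ∈ Erel Γ m ∧
          p.2 = u' - w}
        = {p : F × F | p.2 = N l p.1}) :
    -- (i)
    (∀ l : ℂ, l.im ≠ 0 → kerR (closure (gfield Γ l)) = {u : F | N l u = 0}) ∧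
    (∀ l l' : ℂ, l.im ≠ 0 → l'.im ≠ 0 → {u : F | N l u = 0} = {u : F | N l' u = 0}) ∧
    -- (ii)
    (∀ l : ℂ, l.im ≠ 0 →
      kreinOrth (ranR Γ) =
        {p : F × F | p ∈ adjR (Erel Γ m) ∧ p.1 ∈ kerR (closure (gfield Γ l))}) ∧
    (Dense (ranR Γ) ↔ ∀ l : ℂ, l.im ≠ 0 →
      domR (adjR (Erel Γ m)) ∩ kerR (closure (gfield Γ l)) ⊆ {(0 : F)}) ∧
    (Dense (ranR Γ) ↔ ∃ l : ℂ, l.im ≠ 0 ∧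
      domR (adjR (Erel Γ m)) ∩ kerR (closure (gfield Γ l)) ⊆ {(0 : F)}) ∧
    -- (iii)
    ((mulR Γ = {(0 : F × F)} ↔ mulR (G0 Γ) = {(0 : F)}) ∧
     (mulR Γ = {(0 : F × F)} ↔ ∀ l : ℂ, l.im ≠ 0 → kerR (gfield Γ l) = {(0 : F)})) :=
  statement5_general A Γ hΓ m hm N hN hNclos

end BT
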